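/- arXiv:2509.23865 — 2 statements merged into one kernel-verified Lean document; each statement's English description precedes it below -/
import Mathlib

section
/- Let k² : S¹ × [0,T₀) → (0,∞) be a smooth solution of ∂_t(k²) = k⁻² ∂_s²(k²) - (3/2) k⁻⁴ (∂_s k²)² - 2k² - 4W, where |W| ≤ w₀ for a constant w₀ ≥ 0. Then for all t ∈ [0,T₀), max k²(·,t) ≤ e^{-2t}(max k²(·,0) - 2w₀) + 2w₀; in particular max k²(·,t) ≤ max{max k²(·,0), 2w₀}. -/
open Set Filter Real Topology

section Helpers

lemma helperS {F : ℝ × ℝ → ℝ} (hF : ContDiff ℝ (⊤ : ℕ∞) F) (s t : ℝ) :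
    HasDerivAt (fun x => F (x, t)) (fderiv ℝ F (s, t) (1, 0)) s := by
  have h1 : HasDerivAt (fun x : ℝ => (x, t)) ((1 : ℝ), (0 : ℝ)) s := by
    simpa using (hasDerivAt_id s).prodMk (hasDerivAt_const s t)
  exact ((hF.differentiable (by simp) (s, t)).hasFDerivAt).comp_hasDerivAt s h1

lemma helperT {F : ℝ × ℝ → ℝ} (hF : ContDiff ℝ (⊤ : ℕ∞) F) (s t : ℝ) :
    HasDerivAt (fun x => F (s, x)) (fderiv ℝ F (s, t) (0, 1)) t := by
  have h1 : HasDerivAt (fun x : ℝ => (s, x)) ((0 : ℝ), (1 : ℝ)) t := by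
    simpa using (hasDerivAt_const t s).prodMk (hasDerivAt_id t)
  exact ((hF.differentiable (by simp) (s, t)).hasFDerivAt).comp_hasDerivAt t h1

lemma helperC {F : ℝ × ℝ → ℝ} (hF : ContDiff ℝ (⊤ : ℕ∞) F) (v : ℝ × ℝ) :
    ContDiff ℝ (⊤ : ℕ∞) (fun p => fderiv ℝ F p v) :=
  (hF.fderiv_right (by simp)).clm_apply contDiff_const

/-- Second derivative test at a global max. -/
lemma secondDerivTest {f g h : ℝ → ℝ} (hf : ∀ x, HasDerivAt f (g x) x)
    (hg : ∀ x, HasDerivAt g (h x) x) (hh : Continuous h) {a : ℝ}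
    (hmax : ∀ x, f x ≤ f a) : g a = 0 ∧ h a ≤ 0 := by
  have hg0 : g a = 0 := by
    have : IsLocalMax f a := IsMaxOn.isLocalMax (fun x _ => hmax x) univ_mem
    exact this.hasDerivAt_eq_zero (hf a)
  refine ⟨hg0, ?_⟩
  by_contra hpos
  push_neg at hpos
  obtain ⟨δ, hδ, hball⟩ : ∃ δ > 0, ∀ x ∈ Metric.ball a δ, 0 < h x := by
    have : IsOpen {x | 0 < h x} := isOpen_lt continuous_const hh
    rcases Metric.isOpen_iff.1 this a hpos with ⟨δ, hδ, hs⟩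
    exact ⟨δ, hδ, fun x hx => hs hx⟩
  set b := a + δ / 2 with hb
  have hab : a < b := by simp [hb]; linarith
  have hsub : Icc a b ⊆ Metric.ball a δ := by
    intro x hx
    simp only [Metric.mem_ball, Real.dist_eq, abs_lt]
    have h1 := hx.1; have h2 := hx.2
    rw [hb] at h2
    constructor <;> linarith
  have hgmono : StrictMonoOn g (Icc a b) := by
    apply strictMonoOn_of_deriv_pos (convex_Icc a b)
      (fun x _ => (hg x).continuousAt.continuousWithinAt)
    intro x hx
    rw [(hg x).deriv]
    exact hball x (hsub (interior_subset hx))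
  have hgpos : ∀ x ∈ Ioo a b, 0 < g x := by
    intro x hx
    have := hgmono ⟨le_rfl, hab.le⟩ ⟨hx.1.le, hx.2.le⟩ hx.1
    rwa [hg0] at this
  have hfmono : StrictMonoOn f (Icc a b) := by
    apply strictMonoOn_of_deriv_pos (convex_Icc a b)
      (fun x _ => (hf x).continuousAt.continuousWithinAt)
    intro x hx
    rw [(hf x).deriv]
    rw [interior_Icc] at hx
    exact hgpos x hx
  have := hfmono ⟨le_rfl, hab.le⟩ ⟨hab.le, le_rfl⟩ hab
  exact absurd (hmax b) (not_le.2 this)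

noncomputable def maxF (u : ℝ → ℝ → ℝ) (t : ℝ) : ℝ :=
  sSup ((fun s => u s t) '' Icc 0 (2 * Real.pi))

lemma maxF_attained {u : ℝ → ℝ → ℝ} (hu : Continuous (Function.uncurry u)) (t : ℝ) :
    ∃ s₀ ∈ Icc (0:ℝ) (2 * Real.pi), u s₀ t = maxF u t ∧
      ∀ s ∈ Icc (0:ℝ) (2 * Real.pi), u s t ≤ maxF u t := by
  have hc : ContinuousOn (fun s => u s t) (Icc 0 (2 * Real.pi)) := by
    have : Continuous (fun s => u s t) := hu.comp (continuous_id.prodMk continuous_const)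
    exact this.continuousOn
  have hne : (Icc (0:ℝ) (2 * Real.pi)).Nonempty := ⟨0, le_rfl, by positivity⟩
  obtain ⟨s₀, hs₀, hmax⟩ := isCompact_Icc.exists_isMaxOn hne hc
  have hgr : IsGreatest ((fun s => u s t) '' Icc 0 (2 * Real.pi)) (u s₀ t) :=
    ⟨⟨s₀, hs₀, rfl⟩, fun y ⟨s, hs, hy⟩ => hy ▸ hmax hs⟩
  have : maxF u t = u s₀ t := hgr.csSup_eq
  exact ⟨s₀, hs₀, this.symm, fun s hs => this ▸ hgr.2 ⟨s, hs, rfl⟩⟩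

lemma maxF_cont {u : ℝ → ℝ → ℝ} (hu : Continuous (Function.uncurry u)) :
    Continuous (maxF u) := by
  rw [Metric.continuous_iff]
  intro t₀ ε hε
  set K := Icc (0:ℝ) (2 * Real.pi) ×ˢ Icc (t₀ - 1) (t₀ + 1) with hK
  have hKc : IsCompact K := isCompact_Icc.prod isCompact_Icc
  have huc : UniformContinuousOn (Function.uncurry u) K :=
    hKc.uniformContinuousOn_of_continuous hu.continuousOn
  rw [Metric.uniformContinuousOn_iff] at huc
  obtain ⟨δ, hδ, hd⟩ := huc ε hε
  refine ⟨min δ 1, lt_min hδ one_pos, fun t ht => ?_⟩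
  have htd : dist t t₀ < δ := lt_of_lt_of_le ht (min_le_left _ _)
  have ht1 : dist t t₀ < 1 := lt_of_lt_of_le ht (min_le_right _ _)
  have hmem : ∀ s ∈ Icc (0:ℝ) (2 * Real.pi), ((s, t) ∈ K ∧ (s, t₀) ∈ K) := by
    intro s hs
    rw [Real.dist_eq, abs_lt] at ht1
    constructor <;> exact ⟨hs, by constructor <;> linarith⟩
  have key : ∀ s ∈ Icc (0:ℝ) (2 * Real.pi), dist (u s t) (u s t₀) < ε := by
    intro s hs
    have := hd (s, t) (hmem s hs).1 (s, t₀) (hmem s hs).2 ?_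
    · exact this
    · rw [Prod.dist_eq]
      simp only [dist_self]
      simp only [max_lt_iff]
      exact ⟨hδ, htd⟩
  obtain ⟨s₁, hs₁, he₁, hb₁⟩ := maxF_attained hu t
  obtain ⟨s₂, hs₂, he₂, hb₂⟩ := maxF_attained hu t₀
  rw [Real.dist_eq, abs_lt]
  have k1 := key s₁ hs₁
  have k2 := key s₂ hs₂
  rw [Real.dist_eq, abs_lt] at k1 k2
  have b1 := hb₂ s₁ hs₁
  have b2 := hb₁ s₂ hs₂
  constructor <;> linarith

end Helpers


/-- Partial derivative in the first (arc-length) variable. -/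
noncomputable def pderivS (f : ℝ → ℝ → ℝ) (s t : ℝ) : ℝ :=
  deriv (fun x => f x t) s

/-- Partial derivative in the second (time) variable. -/
noncomputable def pderivT (f : ℝ → ℝ → ℝ) (s t : ℝ) : ℝ :=
  deriv (fun x => f s x) t

/-- Uniform bound on `k²` along the expanding flow: if `k² > 0` on the
(2π-periodic) circle satisfies the curvature evolution equation with
`|W| ≤ w₀`, and `Q0` is the maximum of `k²(·,0)`, then
`k²(·,t) ≤ e^{-2t}(Q0 - 2w₀) + 2w₀ ≤ max (Q0, 2w₀)`. -/
theorem stmt7 (T₀ w₀ Q0 : ℝ) (hT₀ : 0 < T₀) (hw₀ : 0 ≤ w₀)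
    (k W : ℝ → ℝ → ℝ)
    (hsmooth : ContDiff ℝ (⊤ : ℕ∞) (Function.uncurry k))
    (hper : ∀ s t, k (s + 2 * Real.pi) t = k s t)
    (hkpos : ∀ s t, 0 < k s t)
    (hWbd : ∀ s t, |W s t| ≤ w₀)
    (heq : ∀ s, ∀ t ∈ Set.Ico (0 : ℝ) T₀,
      pderivT (fun a b => (k a b) ^ 2) s t
        = ((k s t) ^ 2)⁻¹ * pderivS (pderivS (fun a b => (k a b) ^ 2)) s t
          - (3 / 2) * ((k s t) ^ 4)⁻¹ * (pderivS (fun a b => (k a b) ^ 2) s t) ^ 2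
          - 2 * (k s t) ^ 2 - 4 * W s t)
    (hQ0 : IsGreatest (Set.range fun s => (k s 0) ^ 2) Q0) :
    ∀ t ∈ Set.Ico (0 : ℝ) T₀, ∀ s,
      (k s t) ^ 2 ≤ Real.exp (-2 * t) * (Q0 - 2 * w₀) + 2 * w₀ ∧
      (k s t) ^ 2 ≤ max Q0 (2 * w₀) := by
  -- Notation
  set u : ℝ → ℝ → ℝ := fun s t => (k s t) ^ 2 with hu_def
  have hU : ContDiff ℝ (⊤ : ℕ∞) (Function.uncurry u) := hsmooth.pow 2
  have hUcont : Continuous (Function.uncurry u) := hU.continuous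
  set us : ℝ → ℝ → ℝ := fun s t => fderiv ℝ (Function.uncurry u) (s, t) (1, 0) with hus_def
  set ut : ℝ → ℝ → ℝ := fun s t => fderiv ℝ (Function.uncurry u) (s, t) (0, 1) with hut_def
  set V : ℝ × ℝ → ℝ := fun p => fderiv ℝ (Function.uncurry u) p (1, 0) with hV_def
  have hV : ContDiff ℝ (⊤ : ℕ∞) V := helperC hU (1, 0)
  set uss : ℝ → ℝ → ℝ := fun s t => fderiv ℝ V (s, t) (1, 0) with huss_def
  have hus : ∀ s t, HasDerivAt (fun x => u x t) (us s t) s := fun s t => helperS hU s t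
  have hut : ∀ s t, HasDerivAt (fun x => u s x) (ut s t) t := fun s t => helperT hU s t
  have huss : ∀ s t, HasDerivAt (fun x => us x t) (uss s t) s := fun s t => helperS hV s t
  have hut_cont : Continuous (fun p : ℝ × ℝ => ut p.1 p.2) := by
    have := (helperC hU ((0 : ℝ), (1 : ℝ))).continuous
    exact this
  have huss_cont : ∀ t, Continuous (fun s => uss s t) := by
    intro t
    have := (helperC hV ((1 : ℝ), (0 : ℝ))).continuous
    exact this.comp (continuous_id.prodMk continuous_const)
  have hupos : ∀ s t, 0 < u s t := fun s t => pow_pos (hkpos s t) 2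
  -- Rewrite the evolution equation
  have heq' : ∀ s, ∀ t ∈ Set.Ico (0 : ℝ) T₀,
      ut s t = (u s t)⁻¹ * uss s t - (3 / 2) * ((u s t) ^ 2)⁻¹ * (us s t) ^ 2
        - 2 * u s t - 4 * W s t := by
    intro s t htm
    have h0 := heq s t htm
    have e1 : pderivT (fun a b => (k a b) ^ 2) s t = ut s t := (hut s t).deriv
    have e2 : ∀ x, pderivS (fun a b => (k a b) ^ 2) x t = us x t := fun x => (hus x t).deriv
    have e3 : pderivS (pderivS (fun a b => (k a b) ^ 2)) s t = uss s t := by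
      have : (fun x => pderivS (fun a b => (k a b) ^ 2) x t) = fun x => us x t :=
        funext fun x => e2 x
      show deriv (fun x => pderivS (fun a b => (k a b) ^ 2) x t) s = uss s t
      rw [this]
      exact (huss s t).deriv
    have e4 : (k s t) ^ 4 = (u s t) ^ 2 := by rw [hu_def]; ring
    rw [e1, e2, e3, e4] at h0
    exact h0
  -- Pointwise key estimate at a spatial maximum point
  have hkey : ∀ t ∈ Set.Ico (0 : ℝ) T₀, ∀ a : ℝ, (∀ s, u s t ≤ u a t) →
      ut a t ≤ -2 * u a t + 4 * w₀ := by
    intro t htm a hmax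
    obtain ⟨hg0, hh0⟩ := secondDerivTest (hus · t) (huss · t) (huss_cont t) hmax
    have h0 := heq' a t htm
    rw [hg0] at h0
    have h1 : (u a t)⁻¹ * uss a t ≤ 0 :=
      mul_nonpos_of_nonneg_of_nonpos (inv_nonneg.2 (hupos a t).le) hh0
    have h2 : -w₀ ≤ W a t := (abs_le.1 (hWbd a t)).1
    rw [h0]; ring_nf; nlinarith [h1, h2]
  -- The maximum function
  set M : ℝ → ℝ := maxF u with hM_def
  have hM_cont : Continuous M := maxF_cont hUcont
  have hu_per : ∀ t, Function.Periodic (fun s => u s t) (2 * Real.pi) := by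
    intro t s
    simp only [hu_def]
    rw [hper]
  have hM_bound : ∀ s t, u s t ≤ M t := by
    intro s t
    obtain ⟨y, hy, hxy⟩ := (hu_per t).exists_mem_Ico₀ (by positivity) s
    obtain ⟨s₀, hs₀, he, hb⟩ := maxF_attained hUcont t
    rw [hxy]
    exact hb y ⟨hy.1, hy.2.le⟩
  -- Dini derivative estimate for M
  have hdini : ∀ x ∈ Set.Ico (0 : ℝ) T₀, ∀ r, -2 * M x + 4 * w₀ < r →
      ∃ᶠ z in 𝓝[>] x, slope M x z < r := by
    intro x hx r hr
    rw [Filter.frequently_iff]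
    intro Uset hUset
    obtain ⟨c, hc, hsub⟩ := mem_nhdsGT_iff_exists_Ioc_subset.1 hUset
    set d := min c ((x + T₀) / 2) with hd_def
    have hxd : x < d := lt_min hc (by linarith [hx.2])
    have hdT : d < T₀ := lt_of_le_of_lt (min_le_right _ _) (by linarith [hx.2])
    set z : ℕ → ℝ := fun n => x + (d - x) / (n + 1) with hz_def
    have hz_mem : ∀ n, z n ∈ Ioc x d := by
      intro n
      have hpos : (0:ℝ) < (d - x) / (n + 1) := div_pos (by linarith) (by positivity)
      have hle : (d - x) / (n + 1) ≤ d - x := by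
        apply div_le_self (by linarith)
        have : (0:ℝ) ≤ (n:ℝ) := Nat.cast_nonneg n
        linarith
      exact ⟨by simp only [hz_def]; linarith, by simp only [hz_def]; linarith⟩
    have hz_tendsto : Filter.Tendsto z atTop (nhds x) := by
      have h1 : Filter.Tendsto (fun n : ℕ => (d - x) / ((n:ℝ) + 1)) atTop (nhds 0) := by
        have h2 : Filter.Tendsto (fun n : ℕ => ((n:ℝ) + 1)) atTop atTop :=
          Filter.tendsto_atTop_add_const_right _ 1 tendsto_natCast_atTop_atTop
        exact Filter.Tendsto.div_atTop tendsto_const_nhds h2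
      have := Filter.Tendsto.add (tendsto_const_nhds (x := x)) h1
      simpa using this
    -- max points at times z n
    have hchoice : ∀ n : ℕ, ∃ a, u a (z n) = M (z n) ∧ ∀ s, u s (z n) ≤ u a (z n) := by
      intro n
      obtain ⟨s₀, hs₀, he, hb⟩ := maxF_attained hUcont (z n)
      exact ⟨s₀, he, fun s => he ▸ hM_bound s (z n)⟩
    choose σ hσ_eq hσ_max using hchoice
    have hσ_mem : ∀ n, ∃ y ∈ Icc (0:ℝ) (2 * Real.pi), u y (z n) = u (σ n) (z n) ∧
        ∀ s, u s (z n) ≤ u y (z n) := by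
      intro n
      obtain ⟨y, hy, hxy⟩ := (hu_per (z n)).exists_mem_Ico₀ (by positivity) (σ n)
      refine ⟨y, ⟨hy.1, hy.2.le⟩, hxy.symm, fun s => hxy ▸ hσ_max n s⟩
    choose σ' hσ'_mem hσ'_eq hσ'_max using hσ_mem
    -- mean value theorem in time
    have hmvt : ∀ n : ℕ, ∃ τ ∈ Ioo x (z n),
        ut (σ' n) τ = (u (σ' n) (z n) - u (σ' n) x) / (z n - x) := by
      intro n
      exact exists_hasDerivAt_eq_slope (fun τ => u (σ' n) τ) (fun τ => ut (σ' n) τ)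
        (hz_mem n).1
        (fun τ _ => (hut (σ' n) τ).continuousAt.continuousWithinAt)
        (fun τ _ => hut (σ' n) τ)
    choose τ hτ_mem hτ_eq using hmvt
    -- subsequence
    obtain ⟨sstar, hsstar_mem, φ, hφ, hconv⟩ := isCompact_Icc.tendsto_subseq hσ'_mem
    have hzφ : Filter.Tendsto (z ∘ φ) atTop (nhds x) :=
      hz_tendsto.comp hφ.tendsto_atTop
    have hτφ : Filter.Tendsto (τ ∘ φ) atTop (nhds x) := by
      apply tendsto_of_tendsto_of_tendsto_of_le_of_le (tendsto_const_nhds (x := x)) hzφ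
      · exact fun n => (hτ_mem (φ n)).1.le
      · exact fun n => (hτ_mem (φ n)).2.le
    -- sstar is a global max at time x
    have hsstar_max : ∀ s, u s x ≤ u sstar x := by
      intro s
      have hle : ∀ j, u s (z (φ j)) ≤ u (σ' (φ j)) (z (φ j)) := fun j => hσ'_max (φ j) s
      have h1 : Filter.Tendsto (fun j => u s (z (φ j))) atTop (nhds (u s x)) := by
        have : Filter.Tendsto (fun j => ((s, z (φ j)) : ℝ × ℝ)) atTop (nhds (s, x)) :=
          (tendsto_const_nhds).prodMk_nhds hzφ
        exact (hUcont.tendsto _).comp this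
      have h2 : Filter.Tendsto (fun j => u (σ' (φ j)) (z (φ j))) atTop (nhds (u sstar x)) := by
        have : Filter.Tendsto (fun j => ((σ' (φ j), z (φ j)) : ℝ × ℝ)) atTop
            (nhds (sstar, x)) := hconv.prodMk_nhds hzφ
        exact (hUcont.tendsto _).comp this
      exact le_of_tendsto_of_tendsto' h1 h2 hle
    have hMx : u sstar x = M x := by
      obtain ⟨s₀, hs₀, he, hb⟩ := maxF_attained hUcont x
      refine le_antisymm (hM_bound sstar x) ?_
      show maxF u x ≤ u sstar x
      rw [← he]
      exact hsstar_max s₀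
    -- limit of ut along subsequence
    have hut_lim : Filter.Tendsto (fun j => ut (σ' (φ j)) (τ (φ j))) atTop
        (nhds (ut sstar x)) := by
      have : Filter.Tendsto (fun j => ((σ' (φ j), τ (φ j)) : ℝ × ℝ)) atTop
          (nhds (sstar, x)) := hconv.prodMk_nhds hτφ
      exact (hut_cont.tendsto _).comp this
    have hlt : ut sstar x < r := by
      have := hkey x hx sstar hsstar_max
      rw [hMx] at this
      linarith
    obtain ⟨j, hj⟩ := (hut_lim.eventually_lt_const hlt).exists
    refine ⟨z (φ j), hsub ⟨(hz_mem (φ j)).1, le_trans (hz_mem (φ j)).2 (min_le_left _ _)⟩, ?_⟩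
    -- slope estimate
    have hzx : 0 < z (φ j) - x := by linarith [(hz_mem (φ j)).1]
    rw [slope_def_field]
    have hnum : M (z (φ j)) - M x ≤ u (σ' (φ j)) (z (φ j)) - u (σ' (φ j)) x := by
      have h1 : M (z (φ j)) = u (σ' (φ j)) (z (φ j)) := by
        rw [hσ'_eq (φ j), hσ_eq (φ j)]
      have h2 : u (σ' (φ j)) x ≤ M x := hM_bound _ _
      linarith
    have hquot : (M (z (φ j)) - M x) / (z (φ j) - x)
        ≤ (u (σ' (φ j)) (z (φ j)) - u (σ' (φ j)) x) / (z (φ j) - x) :=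
      (div_le_div_iff_of_pos_right hzx).2 hnum
    calc (M (z (φ j)) - M x) / (z (φ j) - x)
        ≤ (u (σ' (φ j)) (z (φ j)) - u (σ' (φ j)) x) / (z (φ j) - x) := hquot
      _ = ut (σ' (φ j)) (τ (φ j)) := (hτ_eq (φ j)).symm
      _ < r := hj
  -- M 0 ≤ Q0
  have hM0 : M 0 ≤ Q0 := by
    obtain ⟨s₀, hs₀, he, hb⟩ := maxF_attained hUcont 0
    show maxF u 0 ≤ Q0
    rw [← he]
    exact hQ0.2 ⟨s₀, rfl⟩
  -- barrier comparison
  have hmain : ∀ t ∈ Set.Ico (0 : ℝ) T₀,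
      M t ≤ Real.exp (-2 * t) * (Q0 - 2 * w₀) + 2 * w₀ := by
    intro t htm
    have hforall : ∀ ε > 0, M t ≤ (Real.exp (-2 * t) * (Q0 - 2 * w₀) + 2 * w₀) + ε := by
      intro ε hε
      set B : ℝ → ℝ := fun τ => Real.exp (-2 * τ) * (Q0 - 2 * w₀) + (2 * w₀ + ε) with hB_def
      set B' : ℝ → ℝ := fun τ => -2 * Real.exp (-2 * τ) * (Q0 - 2 * w₀) with hB'_def
      have hB : ∀ τ, HasDerivAt B (B' τ) τ := by
        intro τ
        have h1 : HasDerivAt (fun y : ℝ => -2 * y) (-2) τ := by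
          simpa using (hasDerivAt_id τ).const_mul (-2)
        have h2 : HasDerivAt (fun y : ℝ => Real.exp (-2 * y)) (Real.exp (-2 * τ) * (-2)) τ :=
          (Real.hasDerivAt_exp (-2 * τ)).comp τ h1
        have h3 := (h2.mul_const (Q0 - 2 * w₀)).add_const (2 * w₀ + ε)
        exact h3.congr_deriv (by simp only [hB'_def]; ring)
      have happ := image_le_of_liminf_slope_right_lt_deriv_boundary
        (f := M) (f' := fun τ => -2 * M τ + 4 * w₀) (a := 0) (b := t)
        hM_cont.continuousOn
        (fun y hy r hr => hdini y ⟨hy.1, lt_trans hy.2 htm.2⟩ r hr)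
        (B := B) (B' := B')
        (by
          rw [hB_def]
          simp only [mul_zero, neg_zero, Real.exp_zero, one_mul]
          linarith)
        hB
        (by
          intro y hy hMy
          show -2 * M y + 4 * w₀ < B' y
          rw [hMy]
          simp only [hB_def, hB'_def]
          nlinarith [Real.exp_pos (-2 * y), hε])
      have hfin : M t ≤ Real.exp (-2 * t) * (Q0 - 2 * w₀) + (2 * w₀ + ε) :=
        happ (x := t) ⟨htm.1, le_rfl⟩
      linarith
    have := le_of_forall_pos_le_add hforall
    linarith
  -- conclude
  intro t htm s
  have h1 : (k s t) ^ 2 ≤ Real.exp (-2 * t) * (Q0 - 2 * w₀) + 2 * w₀ :=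
    le_trans (hM_bound s t) (hmain t htm)
  refine ⟨h1, le_trans h1 ?_⟩
  have he1 : Real.exp (-2 * t) ≤ 1 := Real.exp_le_one_iff.2 (by linarith [htm.1])
  have he2 : 0 < Real.exp (-2 * t) := Real.exp_pos _
  rcases le_total (2 * w₀) Q0 with hcase | hcase
  · have : Real.exp (-2 * t) * (Q0 - 2 * w₀) ≤ Q0 - 2 * w₀ := by nlinarith
    have : Real.exp (-2 * t) * (Q0 - 2 * w₀) + 2 * w₀ ≤ Q0 := by linarith
    exact le_trans this (le_max_left _ _)
  · have : Real.exp (-2 * t) * (Q0 - 2 * w₀) ≤ 0 := by nlinarith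
    have : Real.exp (-2 * t) * (Q0 - 2 * w₀) + 2 * w₀ ≤ 2 * w₀ := by linarith
    exact le_trans this (le_max_right _ _)
end

section
/- Let u : S¹ × [0,T₀) → (0,∞) be a smooth solution of ∂_t u = k⁻² ∂_s² u - (1/2)(∂_s u)² + 2u + 4W u² with u = k⁻², where W ≤ W̄₀ < 0 is the Webster scalar curvature bounded above by a negative constant. Then max u(·,t) ≤ (max u(·,0) - 1/(2|W̄₀|)) e^{-2t} + 1/(2|W̄₀|); in particular u is uniformly bounded on [0,T₀). -/
open Set Filter Topology

lemma second_deriv_nonpos_at_max (f : ℝ → ℝ) (hf : ContDiff ℝ (⊤ : ℕ∞) f) (s₀ : ℝ)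
    (hmax : ∀ x, f x ≤ f s₀) : deriv (deriv f) s₀ ≤ 0 := by
  have hlm : IsLocalMax f s₀ := Filter.Eventually.of_forall hmax
  have hg0 : deriv f s₀ = 0 := hlm.deriv_eq_zero
  have hf' : ContDiff ℝ (⊤:ℕ∞) f := hf.of_le (by simp)
  obtain ⟨hfd, hg⟩ := contDiff_infty_iff_deriv.mp hf'
  set g := deriv f with hgdef
  by_contra hcon
  push_neg at hcon
  have hd : HasDerivAt g (deriv g s₀) s₀ := (hg.differentiable (by simp) s₀).hasDerivAt
  have hslope : Tendsto (slope g s₀) (𝓝[≠] s₀) (𝓝 (deriv g s₀)) :=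
    hasDerivAt_iff_tendsto_slope.mp hd
  have hev : ∀ᶠ x in 𝓝[≠] s₀, 0 < slope g s₀ x := hslope.eventually (eventually_gt_nhds hcon)
  have hss : Ioi s₀ ⊆ {s₀}ᶜ := fun x hx => ne_of_gt (mem_Ioi.mp hx)
  have hev' : ∀ᶠ x in 𝓝[>] s₀, 0 < slope g s₀ x :=
    hev.filter_mono (nhdsWithin_mono s₀ hss)
  obtain ⟨b, hbm, hsub⟩ := mem_nhdsGT_iff_exists_Ioo_subset.mp hev'
  have hgpos : ∀ x ∈ Ioo s₀ b, 0 < g x := by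
    intro x hx
    have h1 : 0 < slope g s₀ x := hsub hx
    rw [slope_def_field, hg0, sub_zero] at h1
    have hx0 : 0 < x - s₀ := sub_pos.mpr hx.1
    exact (div_pos_iff.mp h1).resolve_right (fun h => absurd hx0 (not_lt.mpr h.2.le)) |>.1
  have hb : s₀ < b := mem_Ioi.mp hbm
  have hmono : StrictMonoOn f (Icc s₀ b) := by
    apply strictMonoOn_of_deriv_pos (convex_Icc s₀ b) (hf.continuous.continuousOn)
    intro x hx
    rw [interior_Icc] at hx
    exact hgpos x hx
  have hmem1 : s₀ ∈ Icc s₀ b := ⟨le_refl _, hb.le⟩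
  have hmem2 : (s₀ + b) / 2 ∈ Icc s₀ b := ⟨by linarith, by linarith⟩
  have := hmono hmem1 hmem2 (by linarith)
  exact absurd (hmax ((s₀ + b) / 2)) (not_le.mpr this)


lemma final_contra (Wb a b x : ℝ) (hw : Wb < 0) (haw : a * (2 * (-Wb)) = 1)
    (hbne : b ≠ 0) (hub : b + a ≤ x) (hxpos : 0 < x)
    (hfin : -2*b ≤ 2*x + 4*Wb*x^2) : False := by
  set w : ℝ := -Wb with hwdef
  have hwpos : 0 < w := by simp [hwdef]; linarith
  have hWb : Wb = -w := by simp [hwdef]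
  rw [hWb] at hfin
  have haw' : a * (2 * w) = 1 := haw
  have h1 : (-2*b) * w ≤ (2*x + 4*(-w)*x^2) * w := mul_le_mul_of_nonneg_right hfin hwpos.le
  have hsq : 0 ≤ (2*w*x - 1)^2 := sq_nonneg _
  have h2 : x * (2*w) ≤ (a + b) * (2*w) := by nlinarith
  have h3 : x ≤ a + b := le_of_mul_le_mul_right h2 (by linarith)
  have h4 : x = a + b := le_antisymm h3 (by linarith)
  have hb2 : 0 < b^2 := by rcases hbne.lt_or_gt with h|h <;> nlinarith
  have hkey : 0 < b^2 * (w * w) := mul_pos hb2 (mul_pos hwpos hwpos)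
  rw [h4] at hfin
  have hfw : (-2*b) * w ≤ (2*(a+b) + 4*(-w)*(a+b)^2) * w := mul_le_mul_of_nonneg_right hfin hwpos.le
  have hbw : b * w * (a*(2*w)) = b * w := by rw [haw']; ring
  have ha2 : (a*(2*w)) * (a*(2*w)) = 1 := by rw [haw']; ring
  nlinarith [hfw, hbw, ha2, hkey]

set_option maxHeartbeats 1000000 in
/-- Uniform bound on `u = k⁻²` when the Webster curvature is bounded above by a
negative constant `Wbar`: `u(·,t) ≤ (U0 - 1/(2|Wbar|)) e^{-2t} + 1/(2|Wbar|)`;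
in particular `u` is uniformly bounded on `[0, T₀)`. -/
theorem stmt8 (T₀ Wbar U0 : ℝ) (hT₀ : 0 < T₀) (hWbar : Wbar < 0)
    (u W : ℝ → ℝ → ℝ)
    (hsmooth : ContDiff ℝ (⊤ : ℕ∞) (Function.uncurry u))
    (hper : ∀ s t, u (s + 2 * Real.pi) t = u s t)
    (hupos : ∀ s t, 0 < u s t)
    (hW : ∀ s t, W s t ≤ Wbar)
    (heq : ∀ s, ∀ t ∈ Set.Ico (0 : ℝ) T₀,
      pderivT u s t
        = u s t * pderivS (pderivS u) s t - (1 / 2) * (pderivS u s t) ^ 2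
          + 2 * u s t + 4 * W s t * (u s t) ^ 2)
    (hU0 : IsGreatest (Set.range fun s => u s 0) U0) :
    (∀ t ∈ Set.Ico (0 : ℝ) T₀, ∀ s,
      u s t ≤ (U0 - 1 / (2 * |Wbar|)) * Real.exp (-2 * t) + 1 / (2 * |Wbar|)) ∧
    ∃ C : ℝ, ∀ s, ∀ t ∈ Set.Ico (0 : ℝ) T₀, u s t ≤ C := by
  have hπ : (0:ℝ) < 2 * Real.pi := by positivity
  set a : ℝ := 1 / (2 * |Wbar|) with ha
  have habs : |Wbar| = -Wbar := abs_of_neg hWbar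
  have hw : (0:ℝ) < -Wbar := by linarith
  have hapos : 0 < a := by rw [ha, habs]; positivity
  have hcont : Continuous (Function.uncurry u) := hsmooth.continuous
  -- fixed-time slice smooth in s
  have hslice : ∀ t : ℝ, ContDiff ℝ (⊤ : ℕ∞) (fun s => u s t) := by
    intro t
    exact hsmooth.comp (contDiff_id.prodMk contDiff_const)
  have htslice : ∀ s : ℝ, ContDiff ℝ (⊤ : ℕ∞) (fun t => u s t) := by
    intro s
    exact hsmooth.comp (contDiff_const.prodMk contDiff_id)
  -- periodic reduction
  have hperiodic : ∀ t s, ∃ s' ∈ Icc 0 (2 * Real.pi), u s' t = u s t := by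
    intro t s
    have hp : Function.Periodic (fun s => u s t) (2 * Real.pi) := fun x => hper x t
    obtain ⟨y, hy, hxy⟩ := hp.exists_mem_Ico₀ hπ s
    exact ⟨y, Ico_subset_Icc_self hy, hxy.symm⟩
  -- the key comparison
  have key : ∀ T, 0 ≤ T → T < T₀ → ∀ ε > 0, U0 - a + ε ≠ 0 →
      ∀ t ∈ Icc (0:ℝ) T, ∀ s, u s t < (U0 - a + ε) * Real.exp (-2*t) + a := by
    intro T hT0 hTT ε hε hεne
    set c := U0 - a + ε with hc
    set B : ℝ → ℝ := fun t => c * Real.exp (-2*t) + a with hBdef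
    have hBcont : Continuous B := by fun_prop
    by_contra hcon
    push_neg at hcon
    obtain ⟨t₁, ht₁, s₁, hs₁⟩ := hcon
    set K : Set (ℝ × ℝ) :=
      (Icc 0 (2*Real.pi) ×ˢ Icc 0 T) ∩ {p : ℝ × ℝ | B p.2 ≤ u p.1 p.2} with hKdef
    have hKcomp : IsCompact K := by
      apply IsCompact.inter_right (isCompact_Icc.prod isCompact_Icc)
      exact isClosed_le (hBcont.comp continuous_snd)
        (hcont.comp (continuous_fst.prodMk continuous_snd))
    have hKne : K.Nonempty := by
      obtain ⟨s₁', hs₁'mem, hs₁'⟩ := hperiodic t₁ s₁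
      refine ⟨(s₁', t₁), ⟨⟨hs₁'mem, ht₁⟩, ?_⟩⟩
      show B t₁ ≤ u s₁' t₁
      rw [hs₁']
      exact hs₁
    set A : Set ℝ := Prod.snd '' K with hAdef
    have hAcomp : IsCompact A := hKcomp.image continuous_snd
    have hAne : A.Nonempty := hKne.image _
    set t₂ := sInf A with ht₂def
    have ht₂mem : t₂ ∈ A := hAcomp.sInf_mem hAne
    obtain ⟨⟨s₀, t₂'⟩, hK₀, ht₂'⟩ := ht₂mem
    simp only at ht₂'
    subst ht₂'
    have hmin : ∀ t' ∈ A, t₂ ≤ t' := fun t' h => csInf_le hAcomp.bddBelow h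
    have ht₂Icc : t₂ ∈ Icc (0:ℝ) T := hK₀.1.2
    have hs₀Icc : s₀ ∈ Icc (0:ℝ) (2*Real.pi) := hK₀.1.1
    have hBle : B t₂ ≤ u s₀ t₂ := hK₀.2
    -- u s 0 ≤ U0
    have hU0le : ∀ s, u s 0 ≤ U0 := fun s => hU0.2 (Set.mem_range_self s)
    have ht₂pos : 0 < t₂ := by
      rcases lt_or_eq_of_le ht₂Icc.1 with h | h
      · exact h
      · exfalso
        have h0 : B 0 = U0 + ε := by
          simp [hBdef, hc]; ring
        have := hBle
        rw [← h] at this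
        rw [h0] at this
        linarith [hU0le s₀]
    -- everything before t₂ is strictly below B
    have hbefore : ∀ t ∈ Ico (0:ℝ) t₂, ∀ s, u s t < B t := by
      intro t ht s
      obtain ⟨s', hs'mem, hs'⟩ := hperiodic t s
      rw [← hs']
      by_contra hcontra
      push_neg at hcontra
      have : t ∈ A := ⟨(s', t), ⟨⟨hs'mem, ⟨ht.1, le_trans ht.2.le ht₂Icc.2⟩⟩, hcontra⟩, rfl⟩
      exact absurd (hmin t this) (not_le.mpr ht.2)
    -- spatial maximizer at time t₂
    obtain ⟨sm, hsmIcc, hsmmax⟩ := isCompact_Icc.exists_isMaxOn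
      (nonempty_Icc.mpr hπ.le) ((hslice t₂).continuous.continuousOn)
    have hglobal : ∀ s, u s t₂ ≤ u sm t₂ := by
      intro s
      obtain ⟨s', hs'mem, hs'⟩ := hperiodic t₂ s
      rw [← hs']
      exact hsmmax hs'mem
    have hub : B t₂ ≤ u sm t₂ := le_trans hBle (hglobal s₀)
    -- spatial derivatives
    set f : ℝ → ℝ := fun s => u s t₂ with hfdef
    have hd1 : deriv f sm = 0 :=
      (IsLocalMax.deriv_eq_zero (Filter.Eventually.of_forall hglobal))
    have hd2 : deriv (deriv f) sm ≤ 0 :=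
      second_deriv_nonpos_at_max f (hslice t₂) sm hglobal
    -- time derivative lower bound
    have ht₂T₀ : t₂ ∈ Ico (0:ℝ) T₀ := ⟨ht₂Icc.1, lt_of_le_of_lt ht₂Icc.2 hTT⟩
    have hgdiff : DifferentiableAt ℝ (fun t => u sm t) t₂ :=
      ((htslice sm).differentiable (by simp)).differentiableAt
    have hBderiv : HasDerivAt B (-2 * c * Real.exp (-2*t₂)) t₂ := by
      have h1 : HasDerivAt (fun t : ℝ => -2*t) (-2) t₂ := by
        simpa using (hasDerivAt_id t₂).const_mul (-2 : ℝ)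
      have h2 := (h1.exp.const_mul c).add_const a
      exact h2.congr_deriv (by ring)
    set h : ℝ → ℝ := fun t => u sm t - B t with hhdef
    have hhderiv : HasDerivAt h (deriv (fun t => u sm t) t₂ - (-2 * c * Real.exp (-2*t₂))) t₂ :=
      hgdiff.hasDerivAt.sub hBderiv
    have hslope2 : Tendsto (slope h t₂) (𝓝[≠] t₂) (𝓝 (deriv (fun t => u sm t) t₂ - (-2 * c * Real.exp (-2*t₂)))) :=
      hasDerivAt_iff_tendsto_slope.mp hhderiv
    have hss2 : Iio t₂ ⊆ {t₂}ᶜ := fun x hx => ne_of_lt (mem_Iio.mp hx)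
    have hslope3 : Tendsto (slope h t₂) (𝓝[<] t₂) (𝓝 (deriv (fun t => u sm t) t₂ - (-2 * c * Real.exp (-2*t₂)))) :=
      hslope2.mono_left (nhdsWithin_mono t₂ hss2)
    have hevslope : ∀ᶠ x in 𝓝[<] t₂, 0 ≤ slope h t₂ x := by
      filter_upwards [Ioo_mem_nhdsLT_of_mem (⟨ht₂pos, le_refl t₂⟩ : t₂ ∈ Ioc 0 t₂)] with x hx
      have hx1 : u sm x < B x := hbefore x ⟨hx.1.le, hx.2⟩ sm
      have hnum : h x - h t₂ < 0 := by
        simp only [hhdef]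
        have : (0:ℝ) ≤ u sm t₂ - B t₂ := by linarith
        linarith
      have hden : x - t₂ < 0 := sub_neg.mpr hx.2
      rw [slope_def_field]
      exact le_of_lt (div_pos_of_neg_of_neg hnum hden)
    have htderiv : 0 ≤ deriv (fun t => u sm t) t₂ - (-2 * c * Real.exp (-2*t₂)) :=
      ge_of_tendsto hslope3 hevslope
    -- PDE at (sm, t₂)
    have hpde := heq sm t₂ ht₂T₀
    have hps : pderivS u sm t₂ = 0 := hd1
    have hps2 : pderivS (pderivS u) sm t₂ = deriv (deriv f) sm := rfl
    have hpt : pderivT u sm t₂ = deriv (fun t => u sm t) t₂ := rfl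
    set uu := u sm t₂ with huu
    have huupos : 0 < uu := hupos sm t₂
    have hWle : W sm t₂ ≤ Wbar := hW sm t₂
    have hpde2 : deriv (fun t => u sm t) t₂ ≤ 2 * uu + 4 * Wbar * uu ^ 2 := by
      rw [← hpt, hpde, hps2, hps]
      have h1 : uu * deriv (deriv f) sm ≤ 0 := mul_nonpos_of_nonneg_of_nonpos huupos.le hd2
      have h2 : 4 * W sm t₂ * uu ^ 2 ≤ 4 * Wbar * uu ^ 2 := by nlinarith [sq_nonneg uu]
      nlinarith
    -- contradiction
    set b := c * Real.exp (-2 * t₂) with hb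
    have hbne : b ≠ 0 := mul_ne_zero hεne (Real.exp_ne_zero _)
    have hub' : b + a ≤ uu := hub
    have hfin : -2 * b ≤ 2 * uu + 4 * Wbar * uu ^ 2 := by
      have : -2 * c * Real.exp (-2 * t₂) = -2 * b := by rw [hb]; ring
      linarith [htderiv, hpde2]
    have haw : a * (2 * (-Wbar)) = 1 := by
      rw [ha, habs]
      exact one_div_mul_cancel (ne_of_gt (by linarith : (0:ℝ) < 2 * (-Wbar)))
    exact final_contra Wbar a b uu hWbar haw hbne hub' huupos hfin
  -- main bound
  have main : ∀ t ∈ Set.Ico (0:ℝ) T₀, ∀ s, u s t ≤ (U0 - a) * Real.exp (-2*t) + a := by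
    intro t ht s
    have hstep : ∀ ε > 0, u s t ≤ (U0 - a) * Real.exp (-2*t) + a + ε := by
      intro ε hε
      -- choose ε' ≤ ε positive with U0 - a + ε' ≠ 0
      obtain ⟨ε', hε'pos, hε'le, hε'ne⟩ : ∃ ε' : ℝ, 0 < ε' ∧ ε' ≤ ε ∧ U0 - a + ε' ≠ 0 := by
        rcases eq_or_ne (U0 - a + ε) 0 with h | h
        · exact ⟨ε/2, by linarith, by linarith, by intro h2; rw [← h] at h2; linarith⟩
        · exact ⟨ε, hε, le_refl _, h⟩
      set T := (t + T₀) / 2 with hT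
      have hT0 : 0 ≤ T := by have := ht.1; have := ht.2; positivity
      have hTT : T < T₀ := by have := ht.2; rw [hT]; linarith
      have htT : t ∈ Icc (0:ℝ) T := ⟨ht.1, by rw [hT]; linarith [ht.2]⟩
      have hlt := key T hT0 hTT ε' hε'pos hε'ne t htT s
      have hexp1 : Real.exp (-2*t) ≤ 1 := Real.exp_le_one_iff.mpr (by linarith [ht.1])
      have hexp0 : 0 < Real.exp (-2*t) := Real.exp_pos _
      nlinarith
    linarith [le_of_forall_pos_le_add hstep]
  constructor
  · exact fun t ht s => main t ht s
  · refine ⟨|U0 - a| + a, fun s t ht => ?_⟩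
    have h1 := main t ht s
    have hexp1 : Real.exp (-2*t) ≤ 1 := Real.exp_le_one_iff.mpr (by linarith [ht.1])
    have hexp0 : 0 < Real.exp (-2*t) := Real.exp_pos _
    have h2 : (U0 - a) * Real.exp (-2*t) ≤ |U0 - a| := by
      calc (U0 - a) * Real.exp (-2*t) ≤ |U0 - a| * Real.exp (-2*t) := by
            exact mul_le_mul_of_nonneg_right (le_abs_self _) hexp0.le
        _ ≤ |U0 - a| * 1 := by
            exact mul_le_mul_of_nonneg_left hexp1 (abs_nonneg _)
        _ = |U0 - a| := mul_one _
    linarith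
end
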